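/- Let A be a finite abelian group with exponent l (the least common multiple of the orders of its elements) and let w ≥ 1 be a natural number. Then μ(A^w) = (1/l) · ∑_{k=1}^{l} |Hom(A, ℤ/kℤ)|^w, where A^w denotes the direct product of w copies of A, and the equality is an equality of rational numbers. -/

import Mathlib

/-!
Counting each `b` once for every multiple of its order in `[1, l]` gives
`∑ b, 1 / ord b = (1 / l) ∑_{k ≤ l} #{b | k • b = 0}` whenever the exponent divides `l`.
For a finite abelian group, `#{b | k • b = 0} = |Hom(B, ℤ/k)|`: both sides are multiplicative in
direct products, so by the structure theorem it suffices to treat `B = ℤ/n`, where both equal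
`gcd(n, k)`. Finally `Hom(A^w, ℤ/k) = Hom(A, ℤ/k)^w`.
-/

open Finset

section

variable {A B : Type*} [AddCommGroup A] [AddCommGroup B]

theorem card_ker_nsmul_congr (e : A ≃+ B) (k : ℕ) :
    Nat.card (nsmulAddMonoidHom k : A →+ A).ker = Nat.card (nsmulAddMonoidHom k : B →+ B).ker :=
  Nat.card_congr <| e.toEquiv.subtypeEquiv fun a => by
    simp only [AddMonoidHom.mem_ker, nsmulAddMonoidHom_apply, AddEquiv.toEquiv_eq_coe,
      AddEquiv.coe_toEquiv, ← map_nsmul, AddEquivClass.map_eq_zero_iff]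

theorem card_ker_nsmul_pi {ι : Type*} [Fintype ι] (M : ι → Type*) [∀ i, AddCommGroup (M i)]
    (k : ℕ) :
    Nat.card (nsmulAddMonoidHom k : (∀ i, M i) →+ ∀ i, M i).ker =
      ∏ i, Nat.card (nsmulAddMonoidHom k : M i →+ M i).ker := by
  rw [← Nat.card_pi]
  refine Nat.card_congr <| (Equiv.subtypeEquivRight fun x => ?_).trans
    (Equiv.subtypePiEquivPi (p := fun i a => a ∈ (nsmulAddMonoidHom k : M i →+ M i).ker))
  simp [funext_iff]

theorem card_addMonoidHom_pi {ι : Type*} [Fintype ι] (M : ι → Type*) [∀ i, AddCommGroup (M i)] :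
    Nat.card ((∀ i, M i) →+ B) = ∏ i, Nat.card (M i →+ B) := by
  classical
  rw [← Nat.card_pi]
  exact Nat.card_congr (Pi.addMonoidHomAddEquiv M B).toEquiv

variable (B) in
def ZMod.addMonoidHomEquivKerNsmul (n : ℕ) :
    (ZMod n →+ B) ≃ (nsmulAddMonoidHom n : B →+ B).ker :=
  (ZMod.lift n).symm.trans <| (zmultiplesHom B).symm.subtypeEquiv fun f => by
    simp [← map_nsmul]

end

theorem ZMod.card_ker_nsmul (n k : ℕ) [NeZero n] :
    Nat.card (nsmulAddMonoidHom k : ZMod n →+ ZMod n).ker = n.gcd k := by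
  rw [IsAddCyclic.card_nsmulAddMonoidHom_ker, Nat.card_zmod]

theorem card_addMonoidHom_zmod_eq_card_ker_nsmul (A : Type*) [AddCommGroup A] [Finite A] (k : ℕ)
    [NeZero k] :
    Nat.card (A →+ ZMod k) = Nat.card (nsmulAddMonoidHom k : A →+ A).ker := by
  obtain ⟨ι, _, n, hn, ⟨e⟩⟩ := AddCommGroup.equiv_directSum_zmod_of_finite' A
  have (i : ι) : NeZero (n i) := ⟨by grind⟩
  let e' : A ≃+ ∀ i, ZMod (n i) := e.trans (DirectSum.addEquivProd _)
  rw [Nat.card_congr (e'.addMonoidHomCongrLeft (N := ZMod k)).toEquiv, card_addMonoidHom_pi,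
    card_ker_nsmul_congr e', card_ker_nsmul_pi]
  refine prod_congr rfl fun i _ => ?_
  rw [Nat.card_congr (ZMod.addMonoidHomEquivKerNsmul _ _), ZMod.card_ker_nsmul, ZMod.card_ker_nsmul,
    Nat.gcd_comm]

theorem card_ker_nsmul_eq_card_filter_addOrderOf_dvd (B : Type*) [AddCommGroup B] [Fintype B]
    (k : ℕ) : Nat.card (nsmulAddMonoidHom k : B →+ B).ker = #{b : B | addOrderOf b ∣ k} := by
  classical
  rw [Nat.card_eq_fintype_card, Fintype.card_subtype]
  simp [addOrderOf_dvd_iff_nsmul_eq_zero]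

theorem sum_one_div_addOrderOf_eq (B : Type*) [AddMonoid B] [Fintype B] {l : ℕ} (hl : l ≠ 0)
    (hB : AddMonoid.exponent B ∣ l) :
    ∑ b : B, (1 : ℚ) / addOrderOf b = 1 / l * ∑ k ∈ Icc 1 l, (#{b : B | addOrderOf b ∣ k} : ℚ) := by
  classical
  have hswap : ∑ k ∈ Icc 1 l, #{b : B | addOrderOf b ∣ k} =
      ∑ b : B, #{k ∈ Icc 1 l | addOrderOf b ∣ k} := by
    simp only [card_eq_sum_ones, sum_filter]
    exact sum_comm
  rw [← Nat.cast_sum, hswap, Nat.cast_sum, mul_sum]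
  refine sum_congr rfl fun b _ => ?_
  have hdvd : addOrderOf b ∣ l := (AddMonoid.addOrder_dvd_exponent b).trans hB
  have hb : (addOrderOf b : ℚ) ≠ 0 := by exact_mod_cast ne_zero_of_dvd_ne_zero hl hdvd
  rw [show Icc 1 l = Ioc 0 l from Icc_add_one_left_eq_Ioc 0 l, Nat.Ioc_filter_dvd_card_eq_div,
    Nat.cast_div hdvd hb]
  field_simp

theorem stmt_5_general (A : Type*) [AddCommGroup A] [Fintype A]
    (l : ℕ) (hl : l = AddMonoid.exponent A) (w : ℕ) :
    (∑ a : Fin w → A, (1 : ℚ) / (addOrderOf a)) =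
      (1 / (l : ℚ)) * ∑ k ∈ Finset.Icc 1 l, (Nat.card (A →+ ZMod k) : ℚ) ^ w := by
  have hl0 : l ≠ 0 := hl ▸ AddMonoid.exponent_ne_zero_of_finite
  have hexp : AddMonoid.exponent (Fin w → A) ∣ l :=
    hl ▸ AddMonoid.exponent_dvd_of_forall_nsmul_eq_zero fun b =>
      funext fun i => AddMonoid.exponent_nsmul_eq_zero (b i)
  rw [sum_one_div_addOrderOf_eq _ hl0 hexp]
  congr 1
  refine sum_congr rfl fun k hk => ?_
  have : NeZero k := ⟨by grind⟩
  rw [← card_ker_nsmul_eq_card_filter_addOrderOf_dvd, ← card_addMonoidHom_zmod_eq_card_ker_nsmul,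
    card_addMonoidHom_pi, prod_const, card_univ, Fintype.card_fin, Nat.cast_pow]

/-- For a finite abelian group `A` of exponent `l` and `w ≥ 1`,
`μ(A^w) = (1/l) · ∑_{k=1}^{l} |Hom(A, ℤ/kℤ)|^w` in `ℚ`. -/
theorem stmt_5 (A : Type*) [AddCommGroup A] [Fintype A]
    (l : ℕ) (hl : l = AddMonoid.exponent A) (w : ℕ) (hw : 1 ≤ w) :
    (∑ a : Fin w → A, (1 : ℚ) / (addOrderOf a)) =
      (1 / (l : ℚ)) * ∑ k ∈ Finset.Icc 1 l, (Nat.card (A →+ ZMod k) : ℚ) ^ w :=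
  stmt_5_general A l hl w
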